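/- arXiv:1704.02700 — 6 statements merged into one kernel-verified Lean document; each statement's English description precedes it below -/
import Mathlib

section
/- Let C be a set of 0/1/all constraints (each either a permutation constraint π(φ(u))=φ(v) for a bijection π, or a two-fan constraint (φ(u)=a)∨(φ(v)=b)) with primal graph G, and let φ_A be a partial assignment on A ⊆ V. For a walk W starting in A, define imp(W) by unit propagation along W (imp(W) = all if at some point propagation yields no restriction). Then for any two implicational walks P and Q (walks with imp ≠ all) ending at the same vertex, the concatenated walk P ∘ Q⁻¹ is conflicting (i.e., ends in A with implied value differing from φ_A) if and only if imp(P) ≠ imp(Q). -/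
/-- A 0/1/all constraint between two domains: either a permutation
constraint (given by a bijection) or a two-fan constraint `(φ(u)=a) ∨ (φ(v)=b)`. -/
inductive ZOA (α β : Type) : Type where
  | perm (π : α ≃ β)
  | twofan (a : α) (b : β)

-- Unit propagation: fixing the first variable to `p`, the set of allowed values of the
-- second variable is either everything (`none`, i.e. "all") or a singleton (`some q`).
open Classical in
noncomputable def ZOA.propg {α β : Type} : ZOA α β → α → Option β
  | .perm π, p => some (π p)
  | .twofan a b, p => if p = a then none else some b

/-- The reversed constraint on the opposite directed edge. -/
def ZOA.rev {α β : Type} : ZOA α β → ZOA β α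
  | .perm π => .perm π.symm
  | .twofan a b => .twofan b a

/-- Satisfaction of a 0/1/all constraint by a pair of values. -/
def ZOA.Sat {α β : Type} : ZOA α β → α → β → Prop
  | .perm π, x, y => π x = y
  | .twofan a b, x, y => x = a ∨ y = b

/-- Walks in the primal graph given by an adjacency relation. -/
inductive Wk {V : Type} (adj : V → V → Prop) : V → V → Type where
  | nil (v : V) : Wk adj v v
  | cons {u v w : V} (h : adj u v) (p : Wk adj v w) : Wk adj u w

/-- Concatenation of walks. -/
def Wk.app {V : Type} {adj : V → V → Prop} :
    ∀ {u v w : V}, Wk adj u v → Wk adj v w → Wk adj u w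
  | _, _, _, .nil _, q => q
  | _, _, _, .cons h p, q => .cons h (Wk.app p q)

/-- Reversal of a walk (uses symmetry of the adjacency relation). -/
def Wk.rev {V : Type} {adj : V → V → Prop} (hs : ∀ u v : V, adj u v → adj v u) :
    ∀ {u v : V}, Wk adj u v → Wk adj v u
  | _, _, .nil x => .nil x
  | _, _, .cons h p => Wk.app (Wk.rev hs p) (.cons (hs _ _ h) (.nil _))

/-- The list of vertices of a walk, in order (with multiplicity). -/
def Wk.support {V : Type} {adj : V → V → Prop} : ∀ {u w : V}, Wk adj u w → List V
  | _, _, .nil x => [x]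
  | u, _, .cons _ p => u :: p.support

/-- Appending a single edge at the end of a walk. -/
def Wk.ext {V : Type} {adj : V → V → Prop} {s u t : V}
    (P : Wk adj s u) (h : adj u t) : Wk adj s t :=
  P.app (.cons h (.nil t))

/-- Unit propagation along a walk: `none` means "all" (no restriction), and "all" is
absorbing. -/
noncomputable def runW {V : Type} {adj : V → V → Prop} {D : V → Type}
    (C : ∀ u v : V, adj u v → ZOA (D u) (D v)) :
    ∀ {u w : V}, Wk adj u w → D u → Option (D w)
  | _, _, .nil _, p => some p
  | _, _, .cons h q, p => ((C _ _ h).propg p).bind (runW C q)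

/-- A walk is `φ_A`-implicational if it starts in `A` and unit propagation along it
from the assigned value yields a value (not "all"). -/
def Impl {V : Type} {adj : V → V → Prop} {D : V → Type}
    (C : ∀ u v : V, adj u v → ZOA (D u) (D v)) (A : Set V) (φ : ∀ v ∈ A, D v)
    {s t : V} (W : Wk adj s t) : Prop :=
  ∃ hs : s ∈ A, (runW C W (φ s hs)).isSome

/-- A walk is `φ_A`-conflicting if it is implicational, ends in `A`, and its implied
value differs from the assigned value of its endpoint. -/
def Confl {V : Type} {adj : V → V → Prop} {D : V → Type}
    (C : ∀ u v : V, adj u v → ZOA (D u) (D v)) (A : Set V) (φ : ∀ v ∈ A, D v)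
    {s t : V} (W : Wk adj s t) : Prop :=
  ∃ (hs : s ∈ A) (ht : t ∈ A) (q : D t),
    runW C W (φ s hs) = some q ∧ q ≠ φ t ht

/-!
If a constraint forces `p ↦ q`, propagating `q` back through it yields `p` (permutation) or
nothing (two-fan `(a, b)`: then `p ≠ a` and `q = b`), whereas any `y ≠ q` is sent to a value
other than `p` (`π⁻¹ y ≠ p`, resp. `a ≠ p`). By induction the same
holds along a walk and its reversal, and `P ∘ Q⁻¹` propagates `imp(P)` back along `Q`.
-/

theorem ZOA.exists_propg_rev_ne_iff {α β : Type} (e : ZOA α β) {p : α} {q : β}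
    (h : e.propg p = some q) (y : β) :
    (∃ p', e.rev.propg y = some p' ∧ p' ≠ p) ↔ y ≠ q := by
  classical
  cases e with
  | perm π =>
    obtain rfl : π p = q := Option.some.inj h
    simp [propg, rev, Equiv.eq_symm_apply, ne_comm]
  | twofan a b =>
    have hpa : p ≠ a := fun hpa => by simp [propg, hpa] at h
    obtain rfl : b = q := by simpa [propg, hpa] using h
    by_cases hy : y = b <;> simp [propg, rev, hy, Ne.symm hpa]

section Walks

variable {V : Type} {adj : V → V → Prop} {D : V → Type}
  (C : ∀ u v : V, adj u v → ZOA (D u) (D v))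

theorem runW_app {u v w : V} (P : Wk adj u v) (Q : Wk adj v w) (x : D u) :
    runW C (P.app Q) x = (runW C P x).bind (runW C Q) := by
  induction P with
  | nil => rfl
  | cons h P ih =>
    simp only [Wk.app, runW, Option.bind_assoc]
    cases (C _ _ h).propg x <;> simp [ih]

theorem runW_single {u v : V} (h : adj u v) (x : D u) :
    runW C (.cons h (.nil v)) x = (C u v h).propg x := by
  simp [runW]

theorem exists_runW_rev_ne_iff (hsym : ∀ u v : V, adj u v → adj v u)
    (hcompat : ∀ u v (h : adj u v), C v u (hsym u v h) = (C u v h).rev)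
    {u w : V} (Q : Wk adj u w) {x : D u} {z : D w} (hQ : runW C Q x = some z) (y : D w) :
    (∃ x', runW C (Q.rev hsym) y = some x' ∧ x' ≠ x) ↔ y ≠ z := by
  induction Q with
  | nil => simp_all [runW, Wk.rev]
  | cons he Q ih =>
    obtain ⟨m, hm, hQm⟩ := Option.bind_eq_some_iff.mp hQ
    rw [← ih hQm, Wk.rev, runW_app]
    simp only [Option.bind_eq_some_iff, runW_single, hcompat _ _ he,
      ← (C _ _ he).exists_propg_rev_ne_iff hm]
    grind

end Walks

/-- Lemma 1 of the paper: for any two implicational walks `P` and `Q`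
ending at the same vertex, the concatenation `P ∘ Q⁻¹` is conflicting iff
`imp(P) ≠ imp(Q)`. -/
theorem confl_append_rev_iff_imp_ne
    {V : Type} {adj : V → V → Prop} {D : V → Type}
    (hsym : ∀ u v : V, adj u v → adj v u)
    (C : ∀ u v : V, adj u v → ZOA (D u) (D v))
    (hcompat : ∀ u v (h : adj u v), C v u (hsym u v h) = (C u v h).rev)
    (A : Set V) (φ : ∀ v ∈ A, D v)
    {p q t : V} (P : Wk adj p t) (Q : Wk adj q t)
    (hp : p ∈ A) (hq : q ∈ A)
    (hP : (runW C P (φ p hp)).isSome) (hQ : (runW C Q (φ q hq)).isSome) :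
    Confl C A φ (P.app (Q.rev hsym)) ↔ runW C P (φ p hp) ≠ runW C Q (φ q hq) := by
  obtain ⟨yP, hyP⟩ := Option.isSome_iff_exists.mp hP
  obtain ⟨yQ, hyQ⟩ := Option.isSome_iff_exists.mp hQ
  have hconfl : Confl C A φ (P.app (Q.rev hsym)) ↔
      ∃ x', runW C (Q.rev hsym) yP = some x' ∧ x' ≠ φ q hq := by
    rw [Confl]
    simp only [exists_prop_of_true hp, exists_prop_of_true hq, runW_app, hyP, Option.bind_some]
  rw [hconfl, exists_runW_rev_ne_iff C hsym hcompat Q hyQ, hyP, hyQ, Ne, Ne, Option.some_inj]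
end

section
/- Let y be a maximum basic F-packing (a sum of vertex-disjoint integral paths of weight 1 and wheels) and x a minimum half-integral F-cover, with |x| = |y|. Then for every wheel W in y of degree d(W), x assigns total weight at least d(W)/2 to the set of vertices of W; moreover if equality holds, then every spoke S of W satisfies x(V(S)) = 1/2. -/
open scoped BigOperators

/-- A *wheel* for the family `F` of conflicting `A`-walks: a simple cycle
`H_1 ∘ … ∘ H_d` (`d` odd) together with pairwise vertex-disjoint spokes
`S_1, …, S_d` from `A` to the cycle, each internally disjoint from the cycle, such
that `S_i ∘ H_i ∘ S_{i+1}⁻¹ ∈ F` for all `i` (indices cyclic). -/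
structure Wheel {V : Type} [DecidableEq V] {adj : V → V → Prop}
    (hs : ∀ u v : V, adj u v → adj v u)
    (A : Set V) (F : ∀ u v : V, Wk adj u v → Prop) : Type where
  d : ℕ
  hodd : Odd d
  hpos : 0 < d
  hub : Fin d → V
  H : ∀ i : Fin d, Wk adj (hub i) (hub (finRotate d i))
  src : Fin d → V
  hsrc : ∀ i, src i ∈ A
  S : ∀ i : Fin d, Wk adj (src i) (hub i)
  spoke_path : ∀ i, (S i).support.Nodup
  spokes_disjoint : ∀ i j, i ≠ j → ∀ x, x ∈ (S i).support → x ∉ (S j).support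
  spoke_meets_cycle : ∀ i j, ∀ x, x ∈ (S i).support → x ∈ (H j).support → x = hub i
  cycle_simple : ∀ x : V, (∑ i : Fin d, (H i).support.dropLast.count x) ≤ 1
  cycle_len : 3 ≤ ∑ i : Fin d, (H i).support.dropLast.length
  mem : ∀ i : Fin d, F (src i) (src (finRotate d i))
    (((S i).app (H i)).app ((S (finRotate d i)).rev hs))

/-- The set of vertices of a wheel. -/
def Wheel.verts {V : Type} [DecidableEq V] {adj : V → V → Prop}
    {hs : ∀ u v : V, adj u v → adj v u}
    {A : Set V} {F : ∀ u v : V, Wk adj u v → Prop}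
    (w : Wheel hs A F) : Finset V :=
  Finset.univ.biUnion
    (fun i : Fin w.d => (w.H i).support.toFinset ∪ (w.S i).support.toFinset)

/-- The set of vertices of an integral path (given with its endpoints). -/
def pVerts {V : Type} [DecidableEq V] {adj : V → V → Prop}
    (p : Σ s t : V, Wk adj s t) : Finset V :=
  p.2.2.support.toFinset

/-! Summing the cover inequalities `x(S_i ∘ H_i ∘ S_{i+1}⁻¹) ≥ 1` over the `d` conflict walks
of a wheel counts every spoke twice and every interior vertex of the cycle once, so
`d ≤ 2 x(spokes) + x(interiors) ≤ 2 x(V(W)) - x(interiors)`. If `x(V(W)) = d/2`, all these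
inequalities are tight and the interiors have weight `0`, so the spoke weights satisfy
`s_i + s_{i+1} = 1` around an odd cycle, which forces `s_i = 1/2`. -/

namespace Wk

variable {V : Type} {adj : V → V → Prop}

theorem support_ne_nil : ∀ {u w : V} (p : Wk adj u w), p.support ≠ []
  | _, _, .nil _ => List.cons_ne_nil _ _
  | _, _, .cons _ _ => List.cons_ne_nil _ _

theorem support_eq_cons : ∀ {u w : V} (p : Wk adj u w), ∃ t, p.support = u :: t
  | _, _, .nil _ => ⟨[], rfl⟩
  | _, _, .cons _ p => ⟨p.support, rfl⟩

theorem getLast_support : ∀ {u w : V} (p : Wk adj u w) (h : p.support ≠ []),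
    p.support.getLast h = w
  | _, _, .nil _, _ => rfl
  | _, _, .cons _ p, _ => by
    simp only [support]
    rw [List.getLast_cons (support_ne_nil p), getLast_support p]

theorem support_app : ∀ {u v w : V} (p : Wk adj u v) (q : Wk adj v w),
    (p.app q).support = p.support.dropLast ++ q.support
  | _, _, _, .nil _, _ => rfl
  | _, _, _, .cons _ p, q => by
    simp only [app, support]
    rw [List.dropLast_cons_of_ne_nil (support_ne_nil p), support_app p q, List.cons_append]

theorem support_rev (hs : ∀ u v : V, adj u v → adj v u) :
    ∀ {u w : V} (p : Wk adj u w), (p.rev hs).support = p.support.reverse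
  | _, _, .nil _ => rfl
  | _, _, .cons _ p => by
    obtain ⟨t, ht⟩ := support_eq_cons p
    simp only [rev, support]
    rw [support_app, support_rev hs p, ht]
    simp [support]

end Wk

theorem sum_biUnion_toFinset_eq_sum_map {ι V M : Type*} [DecidableEq V] [AddCommMonoid M]
    {s : Finset ι} {l : ι → List V} (hnodup : ∀ i ∈ s, (l i).Nodup)
    (hdisj : (s : Set ι).PairwiseDisjoint fun i => (l i).toFinset) (f : V → M) :
    ∑ v ∈ s.biUnion (fun i => (l i).toFinset), f v = ∑ i ∈ s, ((l i).map f).sum := by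
  rw [Finset.sum_biUnion hdisj]
  exact Finset.sum_congr rfl fun i hi => List.sum_toFinset f (hnodup i hi)

theorem sum_biUnion_toFinset_eq_sum_map_of_sum_count_le_one {ι V M : Type*} [Fintype ι]
    [DecidableEq V] [AddCommMonoid M] {l : ι → List V} (hcount : ∀ v, ∑ i, (l i).count v ≤ 1)
    (f : V → M) :
    ∑ v ∈ Finset.univ.biUnion (fun i => (l i).toFinset), f v = ∑ i, ((l i).map f).sum := by
  classical
  refine sum_biUnion_toFinset_eq_sum_map (fun i _ => List.nodup_iff_count_le_one.mpr fun v => ?_)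
    (fun i _ j _ hij => Finset.disjoint_left.mpr fun v hvi hvj => ?_) f
  · exact (Finset.single_le_sum (fun j _ => Nat.zero_le _) (Finset.mem_univ i)).trans (hcount v)
  · have hpair := (Finset.sum_pair (f := fun k => (l k).count v) hij).symm.trans_le
      (Finset.sum_le_sum_of_subset (Finset.subset_univ _))
    have hi := List.count_pos_iff.mpr (List.mem_toFinset.mp hvi)
    have hj := List.count_pos_iff.mpr (List.mem_toFinset.mp hvj)
    have := hcount v
    omega

open Fin.NatCast in
theorem finRotate_iterate_self (d : ℕ) (i : Fin d) : (finRotate d)^[d] i = i := by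
  cases d with
  | zero => exact i.elim0
  | succ n =>
    suffices h : ∀ k, (finRotate (n + 1))^[k] i = i + (k : Fin (n + 1)) by
      rw [h (n + 1), Fin.natCast_self, add_zero]
    intro k
    induction k with
    | zero => simp
    | succ m ih =>
      rw [Function.iterate_succ_apply', ih, finRotate_apply, Nat.cast_succ, add_assoc]

theorem eq_zero_of_comp_finRotate_eq_neg {G : Type*} [AddGroup G] [IsAddTorsionFree G] {d : ℕ}
    (hd : Odd d) {f : Fin d → G} (hf : ∀ i, f (finRotate d i) = -f i) (i : Fin d) : f i = 0 := by
  have heven : ∀ k, f ((finRotate d)^[2 * k] i) = f i := by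
    intro k
    induction k with
    | zero => rfl
    | succ k ih =>
      rw [Nat.mul_succ, Function.iterate_succ_apply', Function.iterate_succ_apply', hf, hf,
        neg_neg, ih]
  obtain ⟨m, hm⟩ := hd
  refine self_eq_neg.mp ?_
  calc f i = f ((finRotate d)^[2 * m + 1] i) := by rw [← hm, finRotate_iterate_self]
    _ = -f i := by rw [Function.iterate_succ_apply', hf, heven]

theorem sum_add_add_comp_finRotate {R : Type*} [CommSemiring R] {d : ℕ} (s r : Fin d → R) :
    ∑ i, (s i + r i + s (finRotate d i)) = 2 * ∑ i, s i + ∑ i, r i := by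
  rw [Finset.sum_add_distrib, Finset.sum_add_distrib, Equiv.sum_comp (finRotate d) s]
  ring

section CyclicCover

variable {K : Type*} [Field K] [LinearOrder K] [IsStrictOrderedRing K] {d : ℕ}
  {s r : Fin d → K}

theorem eq_half_of_add_comp_finRotate_eq_one (hd : Odd d)
    (h : ∀ i, s i + s (finRotate d i) = 1) (i : Fin d) : s i = 1 / 2 := by
  have := eq_zero_of_comp_finRotate_eq_neg hd (f := fun j => s j - 1 / 2)
    (fun j => by linarith [h j]) i
  linarith

theorem card_div_two_le_of_cyclic_cover (hr : ∀ i, 0 ≤ r i)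
    (hcov : ∀ i, 1 ≤ s i + r i + s (finRotate d i)) : (d : K) / 2 ≤ ∑ i, s i + ∑ i, r i := by
  have hsum : (d : K) ≤ ∑ i, (s i + r i + s (finRotate d i)) := by
    simpa using Finset.card_nsmul_le_sum Finset.univ _ 1 fun i _ => hcov i
  have := Finset.sum_nonneg fun i (_ : i ∈ Finset.univ) => hr i
  rw [sum_add_add_comp_finRotate] at hsum
  linarith

theorem eq_half_of_cyclic_cover (hd : Odd d) (hr : ∀ i, 0 ≤ r i)
    (hcov : ∀ i, 1 ≤ s i + r i + s (finRotate d i))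
    (htight : ∑ i, s i + ∑ i, r i ≤ (d : K) / 2) (i : Fin d) : s i = 1 / 2 := by
  have hslack : ∑ i, ((s i + r i + s (finRotate d i) - 1) + r i) = 0 := by
    refine le_antisymm ?_ (Finset.sum_nonneg fun i _ => by linarith [hr i, hcov i])
    rw [Finset.sum_add_distrib, Finset.sum_sub_distrib, sum_add_add_comp_finRotate]
    simp only [Finset.sum_const, Finset.card_univ, Fintype.card_fin, nsmul_eq_mul, mul_one]
    linarith
  refine eq_half_of_add_comp_finRotate_eq_one hd (fun j => ?_) i
  have := (Finset.sum_eq_zero_iff_of_nonneg fun i _ => by linarith [hr i, hcov i]).mp hslack j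
    (Finset.mem_univ j)
  linarith [hr j, hcov j]

end CyclicCover

namespace Wheel

variable {V : Type} [DecidableEq V] {adj : V → V → Prop} {hs : ∀ u v : V, adj u v → adj v u}
  {A : Set V} {F : ∀ u v : V, Wk adj u v → Prop} (W : Wheel hs A F)

def spokeVerts : Finset V :=
  Finset.univ.biUnion fun i => (W.S i).support.toFinset

def cycleVerts : Finset V :=
  Finset.univ.biUnion fun i => (W.H i).support.dropLast.toFinset

theorem spoke_support (i : Fin W.d) :
    (W.S i).support = (W.S i).support.dropLast ++ [W.hub i] := by
  conv_lhs => rw [← List.dropLast_append_getLast (Wk.support_ne_nil (W.S i))]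
  rw [Wk.getLast_support]

theorem hub_mem_spoke (i : Fin W.d) : W.hub i ∈ (W.S i).support := by
  rw [W.spoke_support i]
  exact List.mem_append_right _ (List.mem_singleton_self _)

theorem hub_injective : Function.Injective W.hub := by
  intro i j hij
  by_contra hne
  exact W.spokes_disjoint i j hne _ (hij ▸ W.hub_mem_spoke i) (W.hub_mem_spoke j)

theorem hub_mem_segment_dropLast (i : Fin W.d) : W.hub i ∈ (W.H i).support.dropLast := by
  obtain ⟨t, ht⟩ := (W.H i).support_eq_cons
  rcases eq_or_ne t [] with rfl | hne
  · -- a trivial segment would make `finRotate` fix `i`, so `d = 1` and the cycle has length 1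
    have hlast := Wk.getLast_support (W.H i) (Wk.support_ne_nil _)
    simp only [ht, List.getLast_singleton] at hlast
    have hfix : finRotate W.d i = i := W.hub_injective hlast.symm
    have hd : W.d = 1 := by
      by_contra hd
      have h2 : 2 ≤ W.d := by have := W.hpos; omega
      exact Equiv.Perm.mem_support.mp (support_finRotate_of_le h2 ▸ Finset.mem_univ i) hfix
    have hlen := W.cycle_len
    rw [Finset.sum_eq_single_of_mem i (Finset.mem_univ i)
      fun j _ hj => absurd (Fin.ext (by omega)) hj, ht] at hlen
    simp at hlen
  · rw [ht, List.dropLast_cons_of_ne_nil hne]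
    exact List.mem_cons_self

theorem cycleVerts_inter_spokeVerts_subset :
    W.cycleVerts ∩ W.spokeVerts ⊆ Finset.univ.image W.hub := by
  intro v hv
  simp only [cycleVerts, spokeVerts, Finset.mem_inter, Finset.mem_biUnion, Finset.mem_univ,
    true_and, List.mem_toFinset] at hv
  obtain ⟨⟨j, hvj⟩, ⟨k, hvk⟩⟩ := hv
  rw [W.spoke_meets_cycle k j v hvk (List.mem_of_mem_dropLast hvj)]
  exact Finset.mem_image_of_mem _ (Finset.mem_univ k)

theorem spokeVerts_union_cycleVerts_subset : W.spokeVerts ∪ W.cycleVerts ⊆ W.verts := by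
  intro v hv
  simp only [spokeVerts, cycleVerts, verts, Finset.mem_union, Finset.mem_biUnion,
    Finset.mem_univ, true_and, List.mem_toFinset] at hv ⊢
  rcases hv with ⟨i, hvi⟩ | ⟨i, hvi⟩
  · exact ⟨i, Or.inr hvi⟩
  · exact ⟨i, Or.inl (List.mem_of_mem_dropLast hvi)⟩

section Weights

variable {M : Type*} [AddCommGroup M] (x : V → M)

def spokeWeight (i : Fin W.d) : M :=
  ((W.S i).support.map x).sum

/-- `(W.H i).support.dropLast` is `W.hub i` followed by the interior vertices of `H i`. -/
def interiorWeight (i : Fin W.d) : M :=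
  ((W.H i).support.dropLast.map x).sum - x (W.hub i)

theorem conflict_weight (i : Fin W.d) :
    ((((W.S i).app (W.H i)).app ((W.S (finRotate W.d i)).rev hs)).support.map x).sum
      = W.spokeWeight x i + W.interiorWeight x i + W.spokeWeight x (finRotate W.d i) := by
  rw [Wk.support_app, Wk.support_app, Wk.support_rev,
    List.dropLast_append_of_ne_nil (Wk.support_ne_nil (W.H i))]
  conv_rhs => rw [spokeWeight, W.spoke_support i]
  simp only [interiorWeight, spokeWeight, List.map_append, List.sum_append, List.map_reverse,
    List.sum_reverse, List.map_cons, List.map_nil, List.sum_cons, List.sum_nil, add_zero]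
  abel

theorem sum_spokeWeight : ∑ i, W.spokeWeight x i = ∑ v ∈ W.spokeVerts, x v :=
  (sum_biUnion_toFinset_eq_sum_map (fun i _ => W.spoke_path i)
    (fun i _ j _ hij => Finset.disjoint_left.mpr fun v hvi =>
      by simpa using W.spokes_disjoint i j hij v (List.mem_toFinset.mp hvi)) x).symm

theorem sum_interiorWeight :
    ∑ i, W.interiorWeight x i
      = ∑ v ∈ W.cycleVerts, x v - ∑ v ∈ Finset.univ.image W.hub, x v := by
  rw [Finset.sum_image fun i _ j _ h => W.hub_injective h, cycleVerts,
    sum_biUnion_toFinset_eq_sum_map_of_sum_count_le_one W.cycle_simple, ← Finset.sum_sub_distrib]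
  rfl

variable [PartialOrder M] [IsOrderedAddMonoid M] {x}

theorem interiorWeight_nonneg (hx : ∀ v, 0 ≤ x v) (i : Fin W.d) : 0 ≤ W.interiorWeight x i :=
  sub_nonneg.mpr <| List.single_le_sum
    (fun _ hy => by obtain ⟨v, -, rfl⟩ := List.mem_map.mp hy; exact hx v) _
    (List.mem_map_of_mem (W.hub_mem_segment_dropLast i))

theorem sum_spokeWeight_add_sum_interiorWeight_le (hx : ∀ v, 0 ≤ x v) :
    ∑ i, W.spokeWeight x i + ∑ i, W.interiorWeight x i ≤ ∑ v ∈ W.verts, x v := by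
  have hhubs : ∑ v ∈ W.cycleVerts ∩ W.spokeVerts, x v ≤ ∑ v ∈ Finset.univ.image W.hub, x v :=
    Finset.sum_le_sum_of_subset_of_nonneg W.cycleVerts_inter_spokeVerts_subset
      fun v _ _ => hx v
  calc ∑ i, W.spokeWeight x i + ∑ i, W.interiorWeight x i
      = ∑ v ∈ W.spokeVerts, x v + (∑ v ∈ W.cycleVerts ∩ W.spokeVerts, x v
          - ∑ v ∈ Finset.univ.image W.hub, x v + ∑ v ∈ W.cycleVerts \ W.spokeVerts, x v) := by
        rw [sum_spokeWeight, sum_interiorWeight,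
          ← Finset.sum_inter_add_sum_sdiff W.cycleVerts W.spokeVerts]
        abel
    _ ≤ ∑ v ∈ W.spokeVerts, x v + ∑ v ∈ W.cycleVerts \ W.spokeVerts, x v := by
        grw [hhubs, sub_self, zero_add]
    _ = ∑ v ∈ W.spokeVerts ∪ W.cycleVerts, x v := by
        rw [← Finset.sum_union Finset.disjoint_sdiff, Finset.union_sdiff_self_eq_union]
    _ ≤ ∑ v ∈ W.verts, x v :=
        Finset.sum_le_sum_of_subset_of_nonneg W.spokeVerts_union_cycleVerts_subset
          fun v _ _ => hx v

end Weights

end Wheel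

theorem wheel_cover_bound_general
    {V : Type} [DecidableEq V] {adj : V → V → Prop}
    (hs : ∀ u v : V, adj u v → adj v u)
    (A : Set V) (F : ∀ u v : V, Wk adj u v → Prop)
    {ιW : Type}
    (whl : ιW → Wheel hs A F)
    (x : V → ℚ)
    (hxval : ∀ v, x v = 0 ∨ x v = 1/2 ∨ x v = 1)
    (hcover : ∀ (s t : V) (W : Wk adj s t), F s t W → 1 ≤ (W.support.map x).sum)
    (w : ιW) :
    ((((whl w).d : ℚ) / 2) ≤ ∑ v ∈ (whl w).verts, x v) ∧
    ((∑ v ∈ (whl w).verts, x v) = ((whl w).d : ℚ) / 2 →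
      ∀ i : Fin (whl w).d, (∑ v ∈ ((whl w).S i).support.toFinset, x v) = 1/2) := by
  set W := whl w
  have hx : ∀ v, 0 ≤ x v := fun v => by rcases hxval v with h | h | h <;> rw [h] <;> norm_num
  have hcov : ∀ i, 1 ≤ W.spokeWeight x i + W.interiorWeight x i
      + W.spokeWeight x (finRotate W.d i) :=
    fun i => W.conflict_weight x i ▸ hcover _ _ _ (W.mem i)
  have hle := W.sum_spokeWeight_add_sum_interiorWeight_le hx
  refine ⟨(card_div_two_le_of_cyclic_cover (W.interiorWeight_nonneg hx) hcov).trans hle,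
    fun htight i => ?_⟩
  rw [List.sum_toFinset x (W.spoke_path i)]
  exact eq_half_of_cyclic_cover W.hodd (W.interiorWeight_nonneg hx) hcov (htight ▸ hle) i

/-- let `y` be a maximum basic `F`-packing, given by vertex-disjoint
integral paths (indexed by `ιP`) and wheels (indexed by `ιW`), and let `x` be a
minimum half-integral `F`-cover with `|x| = |y|`. Then every wheel `w` of `y`
satisfies `x(V(w)) ≥ d(w)/2`, and if equality holds then every spoke `S` of `w`
satisfies `x(V(S)) = 1/2`. -/
theorem wheel_cover_bound
    {V : Type} [Fintype V] [DecidableEq V] {adj : V → V → Prop}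
    (hs : ∀ u v : V, adj u v → adj v u)
    (A : Set V) (F : ∀ u v : V, Wk adj u v → Prop)
    {ιP ιW : Type} [Fintype ιP] [Fintype ιW]
    (pth : ιP → Σ s t : V, Wk adj s t)
    (hpthF : ∀ p, F (pth p).1 (pth p).2.1 (pth p).2.2)
    (hpthSimple : ∀ p, (pth p).2.2.support.Nodup)
    (whl : ιW → Wheel hs A F)
    (hPP : ∀ p p', p ≠ p' → Disjoint (pVerts (pth p)) (pVerts (pth p')))
    (hWW : ∀ w w', w ≠ w' → Disjoint (whl w).verts (whl w').verts)
    (hPW : ∀ p w, Disjoint (pVerts (pth p)) (whl w).verts)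
    (x : V → ℚ)
    (hxval : ∀ v, x v = 0 ∨ x v = 1/2 ∨ x v = 1)
    (hcover : ∀ (s t : V) (W : Wk adj s t), F s t W → 1 ≤ (W.support.map x).sum)
    (hsize : ∑ v : V, x v = (Fintype.card ιP : ℚ) + ∑ w : ιW, ((whl w).d : ℚ) / 2)
    (w : ιW) :
    ((((whl w).d : ℚ) / 2) ≤ ∑ v ∈ (whl w).verts, x v) ∧
    ((∑ v ∈ (whl w).verts, x v) = ((whl w).d : ℚ) / 2 →
      ∀ i : Fin (whl w).d, (∑ v ∈ ((whl w).S i).support.toFinset, x v) = 1/2) :=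
  wheel_cover_bound_general hs A F whl x hxval hcover w
end

section
/- The function e : Dʳ → {0, 1/2, 1} defined by e(x) = 0 if x_1 = x_2 = … = x_r, e(x) = 1 if there exist i, j with ⊥ ≠ x_i ≠ x_j ≠ ⊥, and e(x) = 1/2 otherwise, is k-submodular. -/
open scoped ENNReal

-- The domain `D` is modelled as `Option α`, with `⊥ = none` and `D_I = α` (the
-- non-`⊥` elements, embedded via `some`). In the partial order, `⊥ < a` for every
-- `a ∈ D_I` and distinct non-`⊥` elements are incomparable.

-- `a ⊓ b`: the minimum of `a` and `b` if they are comparable, and `⊥` otherwise.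
open Classical in
noncomputable def dmeet {α : Type} : Option α → Option α → Option α
  | none, _ => none
  | some _, none => none
  | some a, some b => if a = b then some a else none

-- `a ⊔ b`: the maximum of `a` and `b` if they are comparable, and `⊥` otherwise.
open Classical in
noncomputable def djoin {α : Type} : Option α → Option α → Option α
  | none, b => b
  | some a, none => some a
  | some a, some b => if a = b then some a else none

-- The r-ary function `e`: value `0` if all coordinates are equal, `1` if two
-- coordinates are distinct non-`⊥` values, and `1/2` otherwise.
open Classical in
noncomputable def eFun {α : Type} (r : ℕ) : (Fin r → Option α) → ℝ≥0∞ :=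
  fun z =>
    if ∀ i j : Fin r, z i = z j then 0
    else if ∃ i j : Fin r, z i ≠ none ∧ z j ≠ none ∧ z i ≠ z j then 1
    else 1/2

/-!
Write `2e(z) ∈ {0, 1, 2}` as a level, so that the claim becomes an inequality in `ℕ`.
Non-`⊥` coordinates of `x ⊓ y` are common values of `x` and `y`, those of `x ⊔ y` are values
of `x` or of `y`. If `x` is constant with value `a ≠ ⊥` (the value `⊥` is trivial), meet and
join take values in `{⊥, a}`, so both have level at most 1, and if neither is constant then `y`
contains both `a` and a value other than `a`. If neither `x` nor `y` is constant, both have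
level at least 1, and only a meet or join of level 2 needs attention: two distinct values of the
meet are distinct values of both `x` and `y`, and two distinct values of the join, with no such
pair in `x` or in `y`, force the meet to be `⊥` everywhere.
-/

section Operations

variable {α : Type}

lemma dmeet_comm (a b : Option α) : dmeet a b = dmeet b a := by
  cases a <;> cases b <;> grind [dmeet]

lemma djoin_comm (a b : Option α) : djoin a b = djoin b a := by
  cases a <;> cases b <;> grind [djoin]

lemma dmeet_eq_some_iff {a b : Option α} {v : α} :
    dmeet a b = some v ↔ a = some v ∧ b = some v := by
  cases a <;> cases b <;> grind [dmeet]

lemma djoin_eq_some {a b : Option α} {v : α} (h : djoin a b = some v) :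
    a = some v ∨ b = some v := by
  cases a <;> cases b <;> grind [djoin]

lemma djoin_some_eq_none_iff {a : α} {b : Option α} :
    djoin (some a) b = none ↔ ∃ c, b = some c ∧ c ≠ a := by
  cases b <;> grind [djoin]

lemma dmeet_some_eq_none_or_eq (a : α) (b : Option α) :
    dmeet (some a) b = none ∨ dmeet (some a) b = some a := by
  cases b <;> grind [dmeet]

lemma djoin_some_eq_none_or_eq (a : α) (b : Option α) :
    djoin (some a) b = none ∨ djoin (some a) b = some a := by
  cases b <;> grind [djoin]

end Operations

section Level

variable {α : Type} {ι : Type*}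

noncomputable def dmeetPi (x y : ι → Option α) : ι → Option α := fun i => dmeet (x i) (y i)

noncomputable def djoinPi (x y : ι → Option α) : ι → Option α := fun i => djoin (x i) (y i)

lemma dmeetPi_comm (x y : ι → Option α) : dmeetPi x y = dmeetPi y x :=
  funext fun i => dmeet_comm (x i) (y i)

lemma djoinPi_comm (x y : ι → Option α) : djoinPi x y = djoinPi y x :=
  funext fun i => djoin_comm (x i) (y i)

def HasDistinctValues (z : ι → Option α) : Prop :=
  ∃ i j, z i ≠ none ∧ z j ≠ none ∧ z i ≠ z j

noncomputable def eLevel (z : ι → Option α) : ℕ :=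
  open Classical in
  if ∀ i j, z i = z j then 0 else if HasDistinctValues z then 2 else 1

lemma eFun_eq_eLevel_div_two {r : ℕ} (z : Fin r → Option α) :
    eFun r z = (eLevel z : ℝ≥0∞) / 2 := by
  unfold eFun eLevel HasDistinctValues
  split_ifs <;> simp [ENNReal.div_self]

variable {z : ι → Option α}

lemma eLevel_le_two (z : ι → Option α) : eLevel z ≤ 2 := by
  unfold eLevel; split_ifs <;> omega

lemma eLevel_eq_zero_iff : eLevel z = 0 ↔ ∀ i j, z i = z j := by
  unfold eLevel; split_ifs with h <;> simpa using h

lemma HasDistinctValues.eLevel_eq (h : HasDistinctValues z) : eLevel z = 2 := by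
  obtain ⟨i, j, -, -, hij⟩ := id h
  unfold eLevel
  rw [if_neg fun hc => hij (hc i j), if_pos h]

lemma eLevel_le_one (h : ¬HasDistinctValues z) : eLevel z ≤ 1 := by
  unfold eLevel; split_ifs <;> omega

lemma exists_ne_none_of_not_const (hz : ¬∀ i j, z i = z j) : ∃ i, z i ≠ none := by
  by_contra! h
  exact hz fun i j => (h i).trans (h j).symm

variable {a : α}

lemma not_hasDistinctValues_of_forall (h : ∀ i, z i = none ∨ z i = some a) :
    ¬HasDistinctValues z := by
  rintro ⟨i, j, hi, hj, hij⟩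
  exact hij (((h i).resolve_left hi).trans ((h j).resolve_left hj).symm)

lemma exists_eq_none_of_forall (h : ∀ i, z i = none ∨ z i = some a)
    (hz : ¬∀ i j, z i = z j) : ∃ i, z i = none := by
  by_contra! hne
  exact hz fun i j => ((h i).resolve_left (hne i)).trans ((h j).resolve_left (hne j)).symm

end Level

section Submodularity

variable {α : Type} {ι : Type*} {x y : ι → Option α}

lemma dmeetPi_const (hx : ∀ i j, x i = x j) (hy : ∀ i j, y i = y j) (i j : ι) :
    dmeetPi x y i = dmeetPi x y j := by
  simp only [dmeetPi, hx i j, hy i j]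

lemma djoinPi_const (hx : ∀ i j, x i = x j) (hy : ∀ i j, y i = y j) (i j : ι) :
    djoinPi x y i = djoinPi x y j := by
  simp only [djoinPi, hx i j, hy i j]

lemma HasDistinctValues.of_dmeetPi_left (h : HasDistinctValues (dmeetPi x y)) :
    HasDistinctValues x := by
  obtain ⟨i, j, hi, hj, hij⟩ := h
  obtain ⟨v, hv⟩ := Option.ne_none_iff_exists'.mp hi
  obtain ⟨w, hw⟩ := Option.ne_none_iff_exists'.mp hj
  obtain ⟨hxi, -⟩ := dmeet_eq_some_iff.mp hv
  obtain ⟨hxj, -⟩ := dmeet_eq_some_iff.mp hw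
  refine ⟨i, j, by simp [hxi], by simp [hxj], ?_⟩
  rwa [hxi, hxj, ← hv, ← hw]

lemma HasDistinctValues.of_dmeetPi_right (h : HasDistinctValues (dmeetPi x y)) :
    HasDistinctValues y :=
  HasDistinctValues.of_dmeetPi_left (dmeetPi_comm x y ▸ h)

lemma dmeetPi_eq_none_of_hasDistinctValues_djoinPi (hj : HasDistinctValues (djoinPi x y))
    (hx : ¬HasDistinctValues x) (hy : ¬HasDistinctValues y) (k : ι) :
    dmeetPi x y k = none := by
  obtain ⟨i, j, hi, hj, hij⟩ := hj
  by_contra hk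
  obtain ⟨u, hu⟩ := Option.ne_none_iff_exists'.mp hk
  obtain ⟨hxk, hyk⟩ := dmeet_eq_some_iff.mp hu
  have agree : ∀ l, djoinPi x y l ≠ none → djoinPi x y l = some u := by
    intro l hl
    obtain ⟨v, hv⟩ := Option.ne_none_iff_exists'.mp hl
    rw [hv]
    by_contra hvu
    rcases djoin_eq_some hv with h | h
    · exact hx ⟨l, k, by simp [h], by simp [hxk], by rwa [h, hxk]⟩
    · exact hy ⟨l, k, by simp [h], by simp [hyk], by rwa [h, hyk]⟩
  exact hij ((agree i hi).trans (agree j hj).symm)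

lemma eLevel_dmeetPi_add_eLevel_djoinPi_le_of_eq_some {a : α} (hx : ∀ i, x i = some a) :
    eLevel (dmeetPi x y) + eLevel (djoinPi x y) ≤ eLevel y := by
  have hxc : ∀ i j, x i = x j := fun i j => (hx i).trans (hx j).symm
  have hm : ∀ i, dmeetPi x y i = none ∨ dmeetPi x y i = some a := fun i => by
    simpa only [dmeetPi, hx i] using dmeet_some_eq_none_or_eq a (y i)
  have hj : ∀ i, djoinPi x y i = none ∨ djoinPi x y i = some a := fun i => by
    simpa only [djoinPi, hx i] using djoin_some_eq_none_or_eq a (y i)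
  have hm1 := eLevel_le_one (not_hasDistinctValues_of_forall hm)
  have hj1 := eLevel_le_one (not_hasDistinctValues_of_forall hj)
  by_cases hmc : ∀ i j, dmeetPi x y i = dmeetPi x y j
  · by_cases hjc : ∀ i j, djoinPi x y i = djoinPi x y j
    · simp [eLevel_eq_zero_iff.mpr hmc, eLevel_eq_zero_iff.mpr hjc]
    have hy : eLevel y ≠ 0 := fun hy => hjc (djoinPi_const hxc (eLevel_eq_zero_iff.mp hy))
    rw [eLevel_eq_zero_iff.mpr hmc]
    omega
  by_cases hjc : ∀ i j, djoinPi x y i = djoinPi x y j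
  · have hy : eLevel y ≠ 0 := fun hy => hmc (dmeetPi_const hxc (eLevel_eq_zero_iff.mp hy))
    rw [eLevel_eq_zero_iff.mpr hjc]
    omega
  -- `y` takes the value `a` where the meet is not `⊥`, and a value other than `a` where the
  -- join is `⊥`.
  obtain ⟨i, hi⟩ := exists_ne_none_of_not_const hmc
  obtain ⟨v, hv⟩ := Option.ne_none_iff_exists'.mp hi
  obtain ⟨hxi, hyi⟩ := dmeet_eq_some_iff.mp hv
  obtain ⟨k, hk⟩ := exists_eq_none_of_forall hj hjc
  obtain ⟨c, hyk, hca⟩ := djoin_some_eq_none_iff.mp (hx k ▸ hk : djoin (some a) (y k) = none)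
  obtain rfl : a = v := Option.some_inj.mp ((hx i).symm.trans hxi)
  have hy : HasDistinctValues y :=
    ⟨i, k, by simp [hyi], by simp [hyk], by simpa [hyi, hyk] using hca.symm⟩
  rw [hy.eLevel_eq]
  omega

lemma eLevel_dmeetPi_add_eLevel_djoinPi_le_of_const (hx : ∀ i j, x i = x j) :
    eLevel (dmeetPi x y) + eLevel (djoinPi x y) ≤ eLevel y := by
  by_cases hsome : ∃ i, x i ≠ none
  · obtain ⟨i, hi⟩ := hsome
    obtain ⟨a, ha⟩ := Option.ne_none_iff_exists'.mp hi
    exact eLevel_dmeetPi_add_eLevel_djoinPi_le_of_eq_some fun k => (hx k i).trans ha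
  push Not at hsome
  have hm : eLevel (dmeetPi x y) = 0 :=
    eLevel_eq_zero_iff.mpr fun i j => by simp [dmeetPi, hsome i, hsome j, dmeet]
  have hj : djoinPi x y = y := funext fun i => by simp [djoinPi, hsome i, djoin]
  rw [hm, hj, zero_add]

theorem eLevel_dmeetPi_add_eLevel_djoinPi_le (x y : ι → Option α) :
    eLevel (dmeetPi x y) + eLevel (djoinPi x y) ≤ eLevel x + eLevel y := by
  by_cases hx : ∀ i j, x i = x j
  · exact (eLevel_dmeetPi_add_eLevel_djoinPi_le_of_const hx).trans le_add_self
  by_cases hy : ∀ i j, y i = y j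
  · rw [dmeetPi_comm, djoinPi_comm]
    exact (eLevel_dmeetPi_add_eLevel_djoinPi_le_of_const hy).trans le_self_add
  have hx1 : eLevel x ≠ 0 := mt eLevel_eq_zero_iff.mp hx
  have hy1 : eLevel y ≠ 0 := mt eLevel_eq_zero_iff.mp hy
  have hm2 := eLevel_le_two (dmeetPi x y)
  have hj2 := eLevel_le_two (djoinPi x y)
  by_cases hm : HasDistinctValues (dmeetPi x y)
  · rw [hm.of_dmeetPi_left.eLevel_eq, hm.of_dmeetPi_right.eLevel_eq]
    omega
  have hm1 := eLevel_le_one hm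
  by_cases hj : HasDistinctValues (djoinPi x y)
  · by_cases hxy : HasDistinctValues x ∨ HasDistinctValues y
    · rcases hxy with h | h <;> rw [h.eLevel_eq] <;> omega
    push Not at hxy
    have hm0 : eLevel (dmeetPi x y) = 0 := eLevel_eq_zero_iff.mpr fun i j => by
      rw [dmeetPi_eq_none_of_hasDistinctValues_djoinPi hj hxy.1 hxy.2 i,
        dmeetPi_eq_none_of_hasDistinctValues_djoinPi hj hxy.1 hxy.2 j]
    omega
  have hj1 := eLevel_le_one hj
  omega

end Submodularity

/-- the function `e` is k-submodular (meet and join taken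
componentwise). -/
theorem eFun_ksubmodular {α : Type} (r : ℕ) (x y : Fin r → Option α) :
    eFun r (fun i => dmeet (x i) (y i)) + eFun r (fun i => djoin (x i) (y i)) ≤
      eFun r x + eFun r y := by
  change eFun r (dmeetPi x y) + eFun r (djoinPi x y) ≤ _
  simp only [eFun_eq_eLevel_div_two, ENNReal.div_add_div_same]
  exact ENNReal.div_le_div_right (by exact_mod_cast eLevel_dmeetPi_add_eLevel_djoinPi_le x y) 2
end

section
/- Let (F, F*) be a nice pair and suppose for an edge uv there exist walks W with [W] in the subdomain D(uv) (i.e., W∘uv ∈ F*) such that the class f_{uv}([W]) := [W∘uv] lies in D(vu). Then D(uv) = D(u), D(vu) = D(v), and f_{uv} is a bijection from D(u) to D(v) with inverse f_{vu} (i.e., the edge behaves as a permutation constraint). -/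
/-- A pair `(F, F*)` of sets of walks is *nice* if: `F ⊆ F*`; `F*` is closed under
taking prefixes; the relation `P ≡ Q` (for `P, Q ∈ F*` ending at the same vertex,
defined by `P ∘ Q⁻¹ ∉ F`) is an equivalence relation; and equivalent walks can be
extended by an edge inside `F*` in the same ways. -/
structure IsNice {V : Type} {adj : V → V → Prop}
    (hs : ∀ u v : V, adj u v → adj v u)
    (F Fstar : ∀ u v : V, Wk adj u v → Prop) : Prop where
  sub : ∀ u v (W : Wk adj u v), F u v W → Fstar u v W
  prefix_closed : ∀ u v w (P : Wk adj u v) (Q : Wk adj v w),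
    Fstar u w (P.app Q) → Fstar u v P
  refl : ∀ u t (P : Wk adj u t), Fstar u t P → ¬ F u u (P.app (P.rev hs))
  symm : ∀ u v t (P : Wk adj u t) (Q : Wk adj v t), Fstar u t P → Fstar v t Q →
    ¬ F u v (P.app (Q.rev hs)) → ¬ F v u (Q.app (P.rev hs))
  trans : ∀ u v w t (P : Wk adj u t) (Q : Wk adj v t) (R : Wk adj w t),
    Fstar u t P → Fstar v t Q → Fstar w t R →
    ¬ F u v (P.app (Q.rev hs)) → ¬ F v w (Q.app (R.rev hs)) →
    ¬ F u w (P.app (R.rev hs))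
  ext : ∀ u v t t' (P : Wk adj u t) (Q : Wk adj v t) (h : adj t t'),
    Fstar u t P → Fstar v t Q → ¬ F u v (P.app (Q.rev hs)) →
    (Fstar u t' (P.ext h) ↔ Fstar v t' (Q.ext h))

/-!
The round trip `W∘uv∘vu` is `≡ W`, by reflexivity of `≡` at `W∘uv`. An `F*`-walk `P` ending
at `u` is therefore either `≡ W`, and extends by `uv` as `W` does, or `≢ W∘uv∘vu`, so that
`P∘(W∘uv∘vu)⁻¹ ∈ F ⊆ F*` and its prefix `P∘uv` lies in `F*`. Thus every such walk extends
by `uv`, the hypothesis passes to the edge `vu`, and `P∘uv∘vu ≡ P` makes `f_{vu}` inverse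
to `f_{uv}`.
-/

theorem Wk.app_assoc {V : Type} {adj : V → V → Prop} :
    ∀ {a b c d : V} (P : Wk adj a b) (Q : Wk adj b c) (R : Wk adj c d),
      (P.app Q).app R = P.app (Q.app R)
  | _, _, _, _, .nil _, _, _ => rfl
  | _, _, _, _, .cons _ p, Q, R => by rw [Wk.app, Wk.app, Wk.app, Wk.app_assoc p Q R]

theorem Wk.ext_app {V : Type} {adj : V → V → Prop} {s t t' w : V}
    (P : Wk adj s t) (h : adj t t') (R : Wk adj t' w) :
    (P.ext h).app R = P.app (.cons h R) := by
  rw [Wk.ext, Wk.app_assoc, Wk.app, Wk.app]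

theorem Wk.rev_ext {V : Type} {adj : V → V → Prop}
    (hs : ∀ u v : V, adj u v → adj v u) {s t t' : V}
    (P : Wk adj s t) (h : adj t t') :
    (P.ext h).rev hs = .cons (hs t t' h) (P.rev hs) := by
  induction P with
  | nil x => rfl
  | cons e p ih =>
      show Wk.app (Wk.rev hs (Wk.ext p h)) _ = _
      rw [ih]
      rfl

/-- `P∘uv∘vu ≡ Q` and `P∘uv ≡ Q∘uv` are literally the same condition. -/
theorem Wk.ext_ext_app_rev {V : Type} {adj : V → V → Prop}
    (hs : ∀ u v : V, adj u v → adj v u) {s s' u v : V}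
    (P : Wk adj s u) (Q : Wk adj s' u) (h : adj u v) :
    ((P.ext h).ext (hs u v h)).app (Q.rev hs) = (P.ext h).app ((Q.ext h).rev hs) := by
  rw [Wk.ext_app, Wk.rev_ext]

theorem Wk.app_rev_ext_ext {V : Type} {adj : V → V → Prop}
    (hs : ∀ u v : V, adj u v → adj v u) {s s' u v : V}
    (P : Wk adj s u) (Q : Wk adj s' u) (h : adj u v) :
    P.app (((Q.ext h).ext (hs u v h)).rev hs) =
      (P.ext h).app (.cons (hs u v h) (Q.rev hs)) := by
  rw [Wk.rev_ext, Wk.rev_ext, Wk.ext_app]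

def HasRoundTrip {V : Type} {adj : V → V → Prop} (hs : ∀ u v : V, adj u v → adj v u)
    (Fstar : ∀ u v : V, Wk adj u v → Prop) {u v : V} (h : adj u v) : Prop :=
  ∃ (s : V) (W : Wk adj s u), Fstar s u W ∧ Fstar s v (W.ext h) ∧
    Fstar s u ((W.ext h).ext (hs u v h))

namespace IsNice

variable {V : Type} {adj : V → V → Prop} {hs : ∀ u v : V, adj u v → adj v u}
  {F Fstar : ∀ u v : V, Wk adj u v → Prop}

theorem ext_ext_equiv (hn : IsNice hs F Fstar) {s u v : V} {P : Wk adj s u} (h : adj u v)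
    (hP : Fstar s v (P.ext h)) :
    ¬ F s s (((P.ext h).ext (hs u v h)).app (P.rev hs)) := by
  rw [Wk.ext_ext_app_rev]
  exact hn.refl _ _ _ hP

theorem fstar_ext_of_not_equiv (hn : IsNice hs F Fstar) {s s' u v : V}
    {P : Wk adj s u} {W : Wk adj s' u} (h : adj u v) (hP : Fstar s u P) (hW : Fstar s' u W)
    (hW₁ : Fstar s' v (W.ext h)) (hW₂ : Fstar s' u ((W.ext h).ext (hs u v h)))
    (hPW : F s s' (P.app (W.rev hs))) :
    Fstar s v (P.ext h) := by
  have hPY : F s s' (P.app (((W.ext h).ext (hs u v h)).rev hs)) := by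
    by_contra hc
    exact hn.trans _ _ _ _ _ _ _ hP hW₂ hW hc (hn.ext_ext_equiv h hW₁) hPW
  have hmem := hn.sub _ _ _ hPY
  rw [Wk.app_rev_ext_ext] at hmem
  exact hn.prefix_closed _ _ _ _ _ hmem

theorem fstar_ext (hn : IsNice hs F Fstar) {u v : V} {h : adj u v}
    (hrt : HasRoundTrip hs Fstar h) {s : V} {P : Wk adj s u} (hP : Fstar s u P) :
    Fstar s v (P.ext h) := by
  obtain ⟨s', W, hW, hW₁, hW₂⟩ := hrt
  by_cases hPW : F s s' (P.app (W.rev hs))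
  · exact hn.fstar_ext_of_not_equiv h hP hW hW₁ hW₂ hPW
  · exact (hn.ext _ _ _ _ P W h hP hW hPW).mpr hW₁

theorem hasRoundTrip_rev (hn : IsNice hs F Fstar) {u v : V} {h : adj u v}
    (hrt : HasRoundTrip hs Fstar h) : HasRoundTrip hs Fstar (hs u v h) := by
  obtain ⟨s, W, hW, hW₁, hW₂⟩ := hrt
  exact ⟨s, W.ext h, hW₁, hW₂, hn.fstar_ext ⟨s, W, hW, hW₁, hW₂⟩ hW₂⟩

theorem equiv_ext (hn : IsNice hs F Fstar) {s s' u v : V} {P : Wk adj s u}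
    {P' : Wk adj s' u} (h : adj u v) (hP₂ : Fstar s u ((P.ext h).ext (hs u v h)))
    (hP : Fstar s u P) (hP' : Fstar s' u P') (hPP' : ¬ F s s' (P.app (P'.rev hs))) :
    ¬ F s s' ((P.ext h).app ((P'.ext h).rev hs)) := by
  have hP₁ : Fstar s v (P.ext h) := hn.prefix_closed _ _ _ _ _ hP₂
  rw [← Wk.ext_ext_app_rev]
  exact hn.trans _ _ _ _ _ _ _ hP₂ hP hP' (hn.ext_ext_equiv h hP₁) hPP'

/-- The converse goes back along `vu`: `P ≡ P∘uv∘vu ≡ P'∘uv∘vu ≡ P'`. -/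
theorem equiv_ext_iff (hn : IsNice hs F Fstar) {u v : V} {h : adj u v}
    (hrt : HasRoundTrip hs Fstar h) {s s' : V} {P : Wk adj s u} {P' : Wk adj s' u}
    (hP : Fstar s u P) (hP' : Fstar s' u P') :
    ¬ F s s' (P.app (P'.rev hs)) ↔ ¬ F s s' ((P.ext h).app ((P'.ext h).rev hs)) := by
  have hrt' := hn.hasRoundTrip_rev hrt
  have hP₁ := hn.fstar_ext hrt hP
  have hP₁' := hn.fstar_ext hrt hP'
  have hP₂ := hn.fstar_ext hrt' hP₁
  have hP₂' := hn.fstar_ext hrt' hP₁'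
  refine ⟨hn.equiv_ext h hP₂ hP hP', fun H => ?_⟩
  have hY : ¬ F s s' (((P.ext h).ext (hs u v h)).app
      (((P'.ext h).ext (hs u v h)).rev hs)) :=
    hn.equiv_ext _ (hn.fstar_ext hrt hP₂) hP₁ hP₁' H
  have hPY : ¬ F s s (P.app (((P.ext h).ext (hs u v h)).rev hs)) :=
    hn.symm _ _ _ _ _ hP₂ hP (hn.ext_ext_equiv h hP₁)
  exact hn.trans _ _ _ _ _ _ _ hP hP₂' hP'
    (hn.trans _ _ _ _ _ _ _ hP hP₂ hP₂' hPY hY) (hn.ext_ext_equiv h hP₁')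

end IsNice

/-- let `(F, F*)` be a nice pair and `uv` an edge such that some
class `[W] ∈ D(uv)` (i.e. `W∘uv ∈ F*`) has `f_{uv}([W]) ∈ D(vu)` (i.e.
`(W∘uv)∘vu ∈ F*`). Then `D(uv) = D(u)`, `D(vu) = D(v)`, and `f_{uv} : D(u) → D(v)` is
a bijection with inverse `f_{vu}`, expressed on representatives: every `F*`-walk
ending at `u` extends by `uv`, every `F*`-walk ending at `v` extends by `vu`, going
forth and back returns to the same `≡`-class, and `f_{uv}` respects and reflects `≡`. -/
theorem nice_perm_edge
    {V : Type} {adj : V → V → Prop}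
    (hs : ∀ u v : V, adj u v → adj v u)
    (F Fstar : ∀ u v : V, Wk adj u v → Prop)
    (hnice : IsNice hs F Fstar)
    {u v : V} (h : adj u v)
    (hex : ∃ (s : V) (W : Wk adj s u), Fstar s u W ∧ Fstar s v (W.ext h) ∧
      Fstar s u ((W.ext h).ext (hs u v h))) :
    (∀ s (P : Wk adj s u), Fstar s u P → Fstar s v (P.ext h)) ∧
    (∀ s (Q : Wk adj s v), Fstar s v Q → Fstar s u (Q.ext (hs u v h))) ∧
    (∀ s (P : Wk adj s u), Fstar s u P →
      ¬ F s s (((P.ext h).ext (hs u v h)).app (P.rev hs))) ∧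
    (∀ s (Q : Wk adj s v), Fstar s v Q →
      ¬ F s s (((Q.ext (hs u v h)).ext h).app (Q.rev hs))) ∧
    (∀ s s' (P : Wk adj s u) (P' : Wk adj s' u), Fstar s u P → Fstar s' u P' →
      (¬ F s s' (P.app (P'.rev hs)) ↔
        ¬ F s s' ((P.ext h).app ((P'.ext h).rev hs)))) := by
  have hrt' := hnice.hasRoundTrip_rev hex
  exact ⟨fun _ _ hP => hnice.fstar_ext hex hP,
    fun _ _ hQ => hnice.fstar_ext hrt' hQ,
    fun _ _ hP => hnice.ext_ext_equiv h (hnice.fstar_ext hex hP),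
    fun _ _ hQ => hnice.ext_ext_equiv (hs u v h) (hnice.fstar_ext hrt' hQ),
    fun _ _ _ _ hP hP' => hnice.equiv_ext_iff hex hP hP'⟩
end

section
/- Let (F, F*) be a nice pair and suppose for an edge uv there exists a class [W] ∈ D(uv) with f_{uv}([W]) ∉ D(vu). Then there exist classes a ∈ D(u) and b ∈ D(v) such that D(uv) = D(u) \ {a}, D(vu) = D(v) \ {b}, f_{uv}(a') = b for every a' ∈ D(uv), and f_{vu}(b') = a for every b' ∈ D(vu) (i.e., the edge behaves as a two-fan constraint (φ(u)=a)∨(φ(v)=b)). -/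
/-!
Write `P ≡ Q` for `¬ F (P ∘ Q⁻¹)`. Since `P ∘ (Q·e)⁻¹ = (P·e⁻¹) ∘ Q⁻¹` and `F ⊆ F*` is
prefix-closed, a walk `B` with `B·e⁻¹ ∉ F*` is equivalent to every walk of the form `Q·e`.
For `b = [W·uv]` this makes `f_{uv}` constant `b` on `D(uv)`, and the extension axiom shows
that `D(vu)` is everything but `b`. Taking `a = [W'·vu]` for some `[W'] ∈ D(vu)`, `a·uv ∈ F*`
would give `W' ≡ a·uv ≡ b`, so `a ∉ D(uv)` and `a` plays the role of `b` at `u`.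
-/

section

variable {V : Type} {adj : V → V → Prop}

namespace Wk

lemma app_assoc_s14 {a b c d : V} (P : Wk adj a b) (Q : Wk adj b c) (R : Wk adj c d) :
    (P.app Q).app R = P.app (Q.app R) := by
  induction P with
  | nil => rfl
  | cons h p ih => simp [Wk.app, ih]

variable (hs : ∀ u v : V, adj u v → adj v u)

lemma rev_ext_s14 {s t t' : V} (P : Wk adj s t) (e : adj t t') :
    (P.ext e).rev hs = .cons (hs t t' e) (P.rev hs) := by
  induction P with
  | nil => rfl
  | cons f p ih =>
    show ((p.ext e).rev hs).app _ = _
    rw [ih]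
    rfl

lemma app_rev_ext {r s t t' : V} (P : Wk adj r t') (Q : Wk adj s t) (e : adj t t') :
    P.app ((Q.ext e).rev hs) = (P.ext (hs t t' e)).app (Q.rev hs) := by
  rw [rev_ext_s14 hs Q e, ext, app_assoc_s14]
  rfl

end Wk

namespace IsNice

variable {hs : ∀ u v : V, adj u v → adj v u} {F Fstar : ∀ u v : V, Wk adj u v → Prop}

lemma fstar_of_F_app (hnice : IsNice hs F Fstar) {s t r : V} {P : Wk adj s t}
    {Q : Wk adj t r} (hF : F s r (P.app Q)) : Fstar s t P :=
  hnice.prefix_closed _ _ _ _ _ (hnice.sub _ _ _ hF)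

lemma fstar_ext_of_F_app_rev_ext (hnice : IsNice hs F Fstar) {r s t t' : V}
    {Q : Wk adj s t'} {W : Wk adj r t} {e : adj t t'} (hF : F s r (Q.app ((W.ext e).rev hs))) :
    Fstar s t (Q.ext (hs t t' e)) := by
  rw [Wk.app_rev_ext] at hF
  exact hnice.fstar_of_F_app hF

lemma not_F_ext_app_rev (hnice : IsNice hs F Fstar) {r s t t' : V} {B : Wk adj r t'}
    {P : Wk adj s t} {e : adj t t'} (hB : Fstar r t' B) (hBe : ¬ Fstar r t (B.ext (hs t t' e)))
    (hPe : Fstar s t' (P.ext e)) :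
    ¬ F s r ((P.ext e).app (B.rev hs)) :=
  hnice.symm _ _ _ _ _ hB hPe (mt hnice.fstar_ext_of_F_app_rev_ext hBe)

lemma fstar_ext_iff_F_app_rev_ext (hnice : IsNice hs F Fstar) {r s t t' : V}
    {W : Wk adj r t} {e : adj t t'} (hWe : Fstar r t' (W.ext e))
    (hWee : ¬ Fstar r t ((W.ext e).ext (hs t t' e))) {Q : Wk adj s t'} (hQ : Fstar s t' Q) :
    Fstar s t (Q.ext (hs t t' e)) ↔ F s r (Q.app ((W.ext e).rev hs)) :=
  ⟨fun hQe => by_contra fun hQW => hWee ((hnice.ext _ _ _ _ _ _ _ hQ hWe hQW).mp hQe),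
    hnice.fstar_ext_of_F_app_rev_ext⟩

lemma not_F_ext_ext_app_rev (hnice : IsNice hs F Fstar) {s t t' : V} {P : Wk adj s t}
    {e : adj t t'} (hPe : Fstar s t' (P.ext e)) :
    ¬ F s s (((P.ext e).ext (hs t t' e)).app (P.rev hs)) := by
  rw [← Wk.app_rev_ext]
  exact hnice.refl _ _ _ hPe

lemma not_fstar_ext_ext_of_not_fstar_ext_ext (hnice : IsNice hs F Fstar) {r r' u v : V}
    {h : adj u v} {W : Wk adj r u} (hWu : Fstar r v (W.ext h))
    (hWuv : ¬ Fstar r u ((W.ext h).ext (hs u v h)))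
    {W' : Wk adj r' v} (hW' : Fstar r' v W') (hW'v : Fstar r' u (W'.ext (hs u v h))) :
    ¬ Fstar r' v ((W'.ext (hs u v h)).ext h) := by
  intro hW'vu
  have hb : ¬ F r' r (((W'.ext (hs u v h)).ext h).app ((W.ext h).rev hs)) :=
    hnice.not_F_ext_app_rev hWu hWuv hW'vu
  have hW'back : ¬ F r' r' (((W'.ext (hs u v h)).ext h).app (W'.rev hs)) :=
    hnice.not_F_ext_ext_app_rev hW'v
  have hW'b : ¬ F r' r (W'.app ((W.ext h).rev hs)) :=
    hnice.trans _ _ _ _ _ _ _ hW' hW'vu hWu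
      (hnice.symm _ _ _ _ _ hW'vu hW' hW'back) hb
  exact hW'b ((hnice.fstar_ext_iff_F_app_rev_ext hWu hWuv hW').mp hW'v)

end IsNice

end

/-- let `(F, F*)` be a nice pair and `uv` an edge such that some
class `[W] ∈ D(uv)` has `f_{uv}([W]) ∉ D(vu)` (and `D(vu)` is nonempty). Then there
are classes `a = [Wa] ∈ D(u)` and `b = [Wb] ∈ D(v)` such that `D(uv) = D(u) \ {a}`,
`D(vu) = D(v) \ {b}`, `f_{uv} ≡ b` on `D(uv)` and `f_{vu} ≡ a` on `D(vu)`; i.e. the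
edge behaves as the two-fan constraint `(φ(u)=a) ∨ (φ(v)=b)`. All statements are
expressed on representative walks, with `P ≡ Q` meaning `P∘Q⁻¹ ∉ F`. -/
theorem nice_twofan_edge
    {V : Type} {adj : V → V → Prop}
    (hs : ∀ u v : V, adj u v → adj v u)
    (F Fstar : ∀ u v : V, Wk adj u v → Prop)
    (hnice : IsNice hs F Fstar)
    {u v : V} (h : adj u v)
    (hex : ∃ (s : V) (W : Wk adj s u), Fstar s u W ∧ Fstar s v (W.ext h) ∧
      ¬ Fstar s u ((W.ext h).ext (hs u v h)))
    (hvu : ∃ (s' : V) (W' : Wk adj s' v), Fstar s' v W' ∧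
      Fstar s' u (W'.ext (hs u v h))) :
    ∃ (sa : V) (Wa : Wk adj sa u) (sb : V) (Wb : Wk adj sb v),
      Fstar sa u Wa ∧ Fstar sb v Wb ∧
      (∀ s (P : Wk adj s u), Fstar s u P →
        (Fstar s v (P.ext h) ↔ F s sa (P.app (Wa.rev hs)))) ∧
      (∀ s (Q : Wk adj s v), Fstar s v Q →
        (Fstar s u (Q.ext (hs u v h)) ↔ F s sb (Q.app (Wb.rev hs)))) ∧
      (∀ s (P : Wk adj s u), Fstar s u P → Fstar s v (P.ext h) →
        ¬ F s sb ((P.ext h).app (Wb.rev hs))) ∧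
      (∀ s (Q : Wk adj s v), Fstar s v Q → Fstar s u (Q.ext (hs u v h)) →
        ¬ F s sa ((Q.ext (hs u v h)).app (Wa.rev hs))) := by
  obtain ⟨sb, W, -, hb, hbu⟩ := hex
  obtain ⟨sa, W', hW', ha⟩ := hvu
  have hav : ¬ Fstar sa v ((W'.ext (hs u v h)).ext h) :=
    hnice.not_fstar_ext_ext_of_not_fstar_ext_ext hb hbu hW' ha
  exact ⟨sa, W'.ext (hs u v h), sb, W.ext h, ha, hb,
    fun _ _ hP => hnice.fstar_ext_iff_F_app_rev_ext ha hav hP,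
    fun _ _ hQ => hnice.fstar_ext_iff_F_app_rev_ext hb hbu hQ,
    fun _ _ _ hPv => hnice.not_F_ext_app_rev hb hbu hPv,
    fun _ _ _ hQu => hnice.not_F_ext_app_rev ha hav hQu⟩
end

section
/- For an instance I = (C, φ_∅) of 0/1/all Deletion with empty assigned set, and any two-fan constraint (φ(u)=a)∨(φ(v)=b) in C, the set B = {(u,a), (v,b)} is a branching set: every deletion set for I is a deletion set for at least one of I[u←a] or I[v←b]. -/
/-- `X` is a deletion set for the instance `(C, φ_A)`: some assignment on `V \ X`
agrees with `φ_A` on `A \ X` and satisfies every constraint both of whose endpoints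
survive. -/
def IsDel {V : Type} {adj : V → V → Prop} {D : V → Type}
    (C : ∀ u v : V, adj u v → ZOA (D u) (D v))
    (A : Set V) (φA : ∀ v ∈ A, D v) (X : Set V) : Prop :=
  ∃ φ : ∀ v : V, v ∉ X → D v,
    (∀ v (hv : v ∈ A) (hx : v ∉ X), φ v hx = φA v hv) ∧
    (∀ u v (h : adj u v) (hu : u ∉ X) (hv : v ∉ X), (C u v h).Sat (φ u hu) (φ v hv))

/-!
The witness assignment `φ` of a deletion set `X` for `I` is itself a witness for one of the
two branches: if `u ∈ X` (resp. `v ∈ X`) the pre-assignment of that branch is deleted and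
imposes nothing, and otherwise `φ` satisfies the two-fan constraint, i.e. `φ u = a` or
`φ v = b`.
-/

section

variable {V : Type} {adj : V → V → Prop} {D : V → Type}

theorem isDel_singleton_of_forall_eq {C : ∀ u v : V, adj u v → ZOA (D u) (D v)}
    {X : Set V} {φ : ∀ v : V, v ∉ X → D v}
    (hsat : ∀ u v (h : adj u v) (hu : u ∉ X) (hv : v ∉ X), (C u v h).Sat (φ u hu) (φ v hv))
    {u : V} {φA : ∀ w ∈ ({u} : Set V), D w} (hφ : ∀ hu : u ∉ X, φ u hu = φA u rfl) :
    IsDel C {u} φA X := by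
  refine ⟨φ, fun w hw hx => ?_, hsat⟩
  obtain rfl := Set.mem_singleton_iff.mp hw
  exact hφ hx

theorem forall_eq_left_or_forall_eq_right_of_twofan
    {C : ∀ u v : V, adj u v → ZOA (D u) (D v)} {X : Set V} {φ : ∀ v : V, v ∉ X → D v}
    (hsat : ∀ u v (h : adj u v) (hu : u ∉ X) (hv : v ∉ X), (C u v h).Sat (φ u hu) (φ v hv))
    {u v : V} {h : adj u v} {a : D u} {b : D v} (hC : C u v h = ZOA.twofan a b) :
    (∀ hu : u ∉ X, φ u hu = a) ∨ (∀ hv : v ∉ X, φ v hv = b) := by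
  by_cases hu : u ∈ X
  · exact Or.inl fun hu' => absurd hu hu'
  by_cases hv : v ∈ X
  · exact Or.inr fun hv' => absurd hv hv'
  have hfan := hsat u v h hu hv
  rw [hC] at hfan
  exact hfan.imp (fun hua _ => hua) (fun hvb _ => hvb)

end

/-- for an instance `I = (C, φ_∅)` with empty assigned set and a
two-fan constraint `(φ(u)=a) ∨ (φ(v)=b)` in `C`, the set `B = {(u,a), (v,b)}` is a
branching set: every deletion set for `I` is a deletion set for `I[u←a]` or for
`I[v←b]`. -/
theorem twofan_branching_set
    {V : Type} {adj : V → V → Prop} {D : V → Type}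
    (C : ∀ u v : V, adj u v → ZOA (D u) (D v))
    {u v : V} (h : adj u v) (a : D u) (b : D v)
    (hC : C u v h = ZOA.twofan a b)
    (X : Set V)
    (hX : IsDel C ∅ (fun w hw => absurd hw (Set.notMem_empty w)) X) :
    IsDel C {u} (fun w hw => by rw [Set.mem_singleton_iff] at hw; subst hw; exact a) X ∨
    IsDel C {v} (fun w hw => by rw [Set.mem_singleton_iff] at hw; subst hw; exact b) X := by
  obtain ⟨φ, -, hsat⟩ := hX
  exact (forall_eq_left_or_forall_eq_right_of_twofan hsat hC).imp
    (isDel_singleton_of_forall_eq hsat) (isDel_singleton_of_forall_eq hsat)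
end
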